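/- arXiv:2604.27196 — 3 statements merged into one kernel-verified Lean document; each statement's English description precedes it below -/
import Mathlib

section
/- Denoiser closure under linear and negative quadratic tilts: Let p be a probability density on ℝᵈ with denoiser F[u,σ] = (∫ x p(x) e^{(√(1−σ²)/σ²)⟨u,x⟩ − ((1−σ²)/(2σ²))‖x‖²} dx)/(∫ p(x) e^{(√(1−σ²)/σ²)⟨u,x⟩ − ((1−σ²)/(2σ²))‖x‖²} dx). For s ≥ 0 and v ∈ ℝᵈ, define p*(x) ∝ p(x)·e^{⟨v,x⟩ − (s/2)‖x‖²} (assuming the normalizer is finite and positive) with denoiser G[u,σ] defined analogously. Then for all σ ∈ (0,1), G[u,σ] = F[u',σ'] where σ' = √(σ²/(1+sσ²)) and u' = σ²/√((1−σ²+sσ²)(1+sσ²)) · v + √((1−σ²)/((1−σ²+sσ²)(1+sσ²))) · u. -/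
open MeasureTheory Real
open scoped RealInnerProductSpace

/-- The exponent of the reverse-conditional tilt at noise level `σ`. -/
noncomputable def tiltExp {d : ℕ} (σ : ℝ) (u x : EuclideanSpace ℝ (Fin d)) : ℝ :=
  Real.sqrt (1 - σ ^ 2) / σ ^ 2 * ⟪u, x⟫ - (1 - σ ^ 2) / (2 * σ ^ 2) * ‖x‖ ^ 2

/-- The denoiser (posterior mean) of a density `p` at location `u`, noise level `σ`. -/
noncomputable def denoiser {d : ℕ} (p : EuclideanSpace ℝ (Fin d) → ℝ)
    (u : EuclideanSpace ℝ (Fin d)) (σ : ℝ) : EuclideanSpace ℝ (Fin d) :=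
  (∫ x, p x * Real.exp (tiltExp σ u x))⁻¹ • ∫ x, (p x * Real.exp (tiltExp σ u x)) • x

/-!
Multiplying the posterior weight `p(x) e^{tiltExp σ u x}` by the tilt `e^{⟨v,x⟩ − (s/2)‖x‖²}`
only changes the coefficients of `⟪·, x⟫` and `‖x‖²` in the exponent, so the tilted weight is
again a posterior weight of `p`, at new parameters `(u', σ')` chosen to match both coefficients.
Constant factors, such as the normaliser of `p*`, cancel in the posterior mean.
-/

section Denoiser

variable {d : ℕ}

theorem denoiser_eq_of_weight_eq_const_mul {p q : EuclideanSpace ℝ (Fin d) → ℝ}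
    {u u' : EuclideanSpace ℝ (Fin d)} {σ σ' c : ℝ} (hc : c ≠ 0)
    (h : ∀ x, q x * exp (tiltExp σ u x) = c * (p x * exp (tiltExp σ' u' x))) :
    denoiser q u σ = denoiser p u' σ' := by
  simp only [denoiser, h, integral_const_mul, mul_smul c, integral_smul]
  rw [smul_smul, mul_inv_rev, mul_assoc, inv_mul_cancel₀ hc, mul_one]

theorem tilt_add_tiltExp_eq_tiltExp {s σ : ℝ} (hs : 0 ≤ s) (hσ : σ ∈ Set.Ioo (0 : ℝ) 1)
    (v u x : EuclideanSpace ℝ (Fin d)) :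
    ⟪v, x⟫ - s / 2 * ‖x‖ ^ 2 + tiltExp σ u x =
      tiltExp (√(σ ^ 2 / (1 + s * σ ^ 2)))
        ((σ ^ 2 / √((1 - σ ^ 2 + s * σ ^ 2) * (1 + s * σ ^ 2))) • v +
          √((1 - σ ^ 2) / ((1 - σ ^ 2 + s * σ ^ 2) * (1 + s * σ ^ 2))) • u) x := by
  obtain ⟨hσ0, hσ1⟩ := hσ
  set A := 1 - σ ^ 2 + s * σ ^ 2
  set B := 1 + s * σ ^ 2
  have hσ2 : 0 < σ ^ 2 := by positivity
  have h1σ : 0 < 1 - σ ^ 2 := by nlinarith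
  have hA : 0 < A := by positivity
  have hB : 0 < B := by positivity
  have hσ'2 : √(σ ^ 2 / B) ^ 2 = σ ^ 2 / B := sq_sqrt (by positivity)
  have h1σ' : 1 - σ ^ 2 / B = A / B := by field_simp; ring
  have hlin : √(1 - √(σ ^ 2 / B) ^ 2) / √(σ ^ 2 / B) ^ 2 = √(A * B) / σ ^ 2 := by
    rw [hσ'2, h1σ', sqrt_div hA.le, sqrt_mul hA.le]
    field_simp
    rw [sq_sqrt hB.le]
  have hquad : (1 - √(σ ^ 2 / B) ^ 2) / (2 * √(σ ^ 2 / B) ^ 2) =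
      s / 2 + (1 - σ ^ 2) / (2 * σ ^ 2) := by
    rw [hσ'2, h1σ']
    field_simp
    ring
  simp only [tiltExp, inner_add_left, real_inner_smul_left, hlin, hquad, sqrt_div h1σ.le]
  field_simp
  ring

end Denoiser

theorem denoiser_closure_general {d : ℕ} (p : EuclideanSpace ℝ (Fin d) → ℝ)
    (v : EuclideanSpace ℝ (Fin d)) (s : ℝ) (hs : 0 ≤ s)
    (hZ : 0 < ∫ x, p x * Real.exp (⟪v, x⟫ - s / 2 * ‖x‖ ^ 2))
    (pstar : EuclideanSpace ℝ (Fin d) → ℝ)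
    (hpstar : ∀ x, pstar x = p x * Real.exp (⟪v, x⟫ - s / 2 * ‖x‖ ^ 2) /
      (∫ y, p y * Real.exp (⟪v, y⟫ - s / 2 * ‖y‖ ^ 2)))
    (σ : ℝ) (hσ : σ ∈ Set.Ioo (0 : ℝ) 1) (u : EuclideanSpace ℝ (Fin d)) :
    denoiser pstar u σ =
      denoiser p
        ((σ ^ 2 / Real.sqrt ((1 - σ ^ 2 + s * σ ^ 2) * (1 + s * σ ^ 2))) • v +
          Real.sqrt ((1 - σ ^ 2) / ((1 - σ ^ 2 + s * σ ^ 2) * (1 + s * σ ^ 2))) • u)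
        (Real.sqrt (σ ^ 2 / (1 + s * σ ^ 2))) := by
  refine denoiser_eq_of_weight_eq_const_mul (inv_ne_zero hZ.ne') fun x => ?_
  rw [hpstar x, ← tilt_add_tiltExp_eq_tiltExp hs hσ, exp_add]
  ring

/-- Denoiser closure under linear and negative quadratic tilts: the denoiser of
`p*(x) ∝ p(x)e^{⟨v,x⟩ − (s/2)‖x‖²}` at `(u,σ)` equals the denoiser of `p` at the
shifted location `u'` and shifted noise level `σ' = √(σ²/(1+sσ²))`. -/
theorem denoiser_closure {d : ℕ} (p : EuclideanSpace ℝ (Fin d) → ℝ)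
    (v : EuclideanSpace ℝ (Fin d)) (s : ℝ) (hs : 0 ≤ s)
    (hZ : 0 < ∫ x, p x * Real.exp (⟪v, x⟫ - s / 2 * ‖x‖ ^ 2))
    (pstar : EuclideanSpace ℝ (Fin d) → ℝ)
    (hpstar : ∀ x, pstar x = p x * Real.exp (⟪v, x⟫ - s / 2 * ‖x‖ ^ 2) /
      (∫ y, p y * Real.exp (⟪v, y⟫ - s / 2 * ‖y‖ ^ 2)))
    (hFint : ∀ (u : EuclideanSpace ℝ (Fin d)) (σ : ℝ),
      Integrable (fun x => p x * Real.exp (tiltExp σ u x)) ∧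
      Integrable (fun x => (p x * Real.exp (tiltExp σ u x)) • x))
    (hGint : ∀ (u : EuclideanSpace ℝ (Fin d)) (σ : ℝ),
      Integrable (fun x => pstar x * Real.exp (tiltExp σ u x)) ∧
      Integrable (fun x => (pstar x * Real.exp (tiltExp σ u x)) • x))
    (σ : ℝ) (hσ : σ ∈ Set.Ioo (0 : ℝ) 1) (u : EuclideanSpace ℝ (Fin d)) :
    denoiser pstar u σ =
      denoiser p
        ((σ ^ 2 / Real.sqrt ((1 - σ ^ 2 + s * σ ^ 2) * (1 + s * σ ^ 2))) • v +
          Real.sqrt ((1 - σ ^ 2) / ((1 - σ ^ 2 + s * σ ^ 2) * (1 + s * σ ^ 2))) • u)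
        (Real.sqrt (σ ^ 2 / (1 + s * σ ^ 2))) :=
  denoiser_closure_general p v s hs hZ pstar hpstar σ hσ u
end

section
/- Score relation under combined tilt: With p, p*, v, s, σ', u' as in the denoiser closure theorem, and q_σ, q*_σ the marginal densities of √(1−σ²)X + σZ for X ∼ p and X ∼ p* respectively, one has for all σ ∈ (0,1) (with σ' ∈ (0,1)): ∇ log q*(u,σ) = −(1/σ²)(u − √((1−σ²)/(1−(σ')²))·u') + ((σ')²√(1−σ²))/(σ²√(1−(σ')²)) · ∇ log q(u',σ'). -/
set_option maxHeartbeats 1000000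


open MeasureTheory Real
open scoped RealInnerProductSpace

/-- The score of the Gaussian convolution of `p`, expressed via Tweedie's formula. -/
noncomputable def score {d : ℕ} (p : EuclideanSpace ℝ (Fin d) → ℝ)
    (u : EuclideanSpace ℝ (Fin d)) (σ : ℝ) : EuclideanSpace ℝ (Fin d) :=
  -((σ ^ 2)⁻¹ • u) + (Real.sqrt (1 - σ ^ 2) / σ ^ 2) • denoiser p u σ

/-- Score relation under combined tilt:
`∇ log q*(u,σ) = −(1/σ²)(u − √((1−σ²)/(1−σ'²))·u') + (σ'²√(1−σ²))/(σ²√(1−σ'²)) · ∇ log q(u',σ')`. -/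
theorem score_relation {d : ℕ} (p : EuclideanSpace ℝ (Fin d) → ℝ)
    (v : EuclideanSpace ℝ (Fin d)) (s : ℝ) (hs : 0 ≤ s)
    (hZ : 0 < ∫ x, p x * Real.exp (⟪v, x⟫ - s / 2 * ‖x‖ ^ 2))
    (pstar : EuclideanSpace ℝ (Fin d) → ℝ)
    (hpstar : ∀ x, pstar x = p x * Real.exp (⟪v, x⟫ - s / 2 * ‖x‖ ^ 2) /
      (∫ y, p y * Real.exp (⟪v, y⟫ - s / 2 * ‖y‖ ^ 2)))
    (hFint : ∀ (u : EuclideanSpace ℝ (Fin d)) (σ : ℝ),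
      Integrable (fun x => p x * Real.exp (tiltExp σ u x)) ∧
      Integrable (fun x => (p x * Real.exp (tiltExp σ u x)) • x))
    (hGint : ∀ (u : EuclideanSpace ℝ (Fin d)) (σ : ℝ),
      Integrable (fun x => pstar x * Real.exp (tiltExp σ u x)) ∧
      Integrable (fun x => (pstar x * Real.exp (tiltExp σ u x)) • x))
    (σ : ℝ) (hσ : σ ∈ Set.Ioo (0 : ℝ) 1) (u : EuclideanSpace ℝ (Fin d))
    (σ' : ℝ) (hσ' : σ' = Real.sqrt (σ ^ 2 / (1 + s * σ ^ 2)))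
    (u' : EuclideanSpace ℝ (Fin d))
    (hu' : u' = (σ ^ 2 / Real.sqrt ((1 - σ ^ 2 + s * σ ^ 2) * (1 + s * σ ^ 2))) • v +
      Real.sqrt ((1 - σ ^ 2) / ((1 - σ ^ 2 + s * σ ^ 2) * (1 + s * σ ^ 2))) • u) :
    σ' ∈ Set.Ioo (0 : ℝ) 1 ∧
    score pstar u σ =
      -((σ ^ 2)⁻¹ • (u - Real.sqrt ((1 - σ ^ 2) / (1 - σ' ^ 2)) • u')) +
        (σ' ^ 2 * Real.sqrt (1 - σ ^ 2) / (σ ^ 2 * Real.sqrt (1 - σ' ^ 2))) •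
          score p u' σ' := by
  obtain ⟨hσ0, hσ1⟩ := hσ
  have hσ2 : (0:ℝ) < σ ^ 2 := by positivity
  have hA : (0:ℝ) < 1 + s * σ ^ 2 := by nlinarith
  have hB : (0:ℝ) < 1 - σ ^ 2 + s * σ ^ 2 := by nlinarith
  have h1σ : (0:ℝ) < 1 - σ ^ 2 := by nlinarith
  have hσ'2 : σ' ^ 2 = σ ^ 2 / (1 + s * σ ^ 2) := by
    rw [hσ']; exact Real.sq_sqrt (by positivity)
  have hσ'pos : 0 < σ' := by rw [hσ']; exact Real.sqrt_pos.2 (by positivity)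
  have hσ'sq_lt : σ' ^ 2 < 1 := by
    rw [hσ'2, div_lt_one hA]; nlinarith
  have hσ'lt : σ' < 1 := by nlinarith
  have h1σ' : (0:ℝ) < 1 - σ' ^ 2 := by nlinarith
  have h1'eq : 1 - σ' ^ 2 = (1 - σ ^ 2 + s * σ ^ 2) / (1 + s * σ ^ 2) := by
    rw [hσ'2]; field_simp; ring
  -- sqrt abbreviations
  set a := Real.sqrt (1 + s * σ ^ 2) with ha
  set b := Real.sqrt (1 - σ ^ 2 + s * σ ^ 2) with hb
  set c := Real.sqrt (1 - σ ^ 2) with hc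
  have ha2 : a ^ 2 = 1 + s * σ ^ 2 := Real.sq_sqrt hA.le
  have hb2 : b ^ 2 = 1 - σ ^ 2 + s * σ ^ 2 := Real.sq_sqrt hB.le
  have hc2 : c ^ 2 = 1 - σ ^ 2 := Real.sq_sqrt h1σ.le
  have hapos : 0 < a := Real.sqrt_pos.2 hA
  have hbpos : 0 < b := Real.sqrt_pos.2 hB
  have hcpos : 0 < c := Real.sqrt_pos.2 h1σ
  have hsqBA : Real.sqrt ((1 - σ ^ 2 + s * σ ^ 2) * (1 + s * σ ^ 2)) = b * a :=
    Real.sqrt_mul hB.le _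
  have hsq1' : Real.sqrt (1 - σ' ^ 2) = b / a := by
    rw [h1'eq, Real.sqrt_div hB.le]
  have hsqcba : Real.sqrt ((1 - σ ^ 2) / ((1 - σ ^ 2 + s * σ ^ 2) * (1 + s * σ ^ 2)))
      = c / (b * a) := by
    rw [Real.sqrt_div h1σ.le, hsqBA]
  have hcab : Real.sqrt ((1 - σ ^ 2) / (1 - σ' ^ 2)) = c / (b / a) := by
    rw [Real.sqrt_div h1σ.le, hsq1']
  have haneg : a ≠ 0 := ne_of_gt hapos
  have hbneg : b ≠ 0 := ne_of_gt hbpos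
  have hσneg : σ ^ 2 ≠ 0 := ne_of_gt hσ2
  clear_value a b c
  have key1 : Real.sqrt (1 - σ' ^ 2) / σ' ^ 2 = b * a / σ ^ 2 := by
    rw [hsq1', hσ'2, ← ha2]
    field_simp
  have key2 : (1 - σ' ^ 2) / (2 * σ' ^ 2) = (1 - σ ^ 2) / (2 * σ ^ 2) + s / 2 := by
    rw [h1'eq, hσ'2]
    field_simp
  -- the tilt exponent identity
  have htilt : ∀ x : EuclideanSpace ℝ (Fin d),
      tiltExp σ' u' x = tiltExp σ u x + (⟪v, x⟫ - s / 2 * ‖x‖ ^ 2) := by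
    intro x
    simp only [tiltExp]
    rw [key1, key2, hu', inner_add_left, real_inner_smul_left, real_inner_smul_left,
      hsqBA, hsqcba, ← hc]
    field_simp
    ring
  -- the denoiser identity
  set Z := ∫ y, p y * Real.exp (⟪v, y⟫ - s / 2 * ‖y‖ ^ 2) with hZdef
  have hZ0 : Z ≠ 0 := ne_of_gt hZ
  have hpt : ∀ x : EuclideanSpace ℝ (Fin d),
      pstar x * Real.exp (tiltExp σ u x) = Z⁻¹ * (p x * Real.exp (tiltExp σ' u' x)) := by
    intro x
    rw [hpstar x, htilt x, Real.exp_add]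
    ring
  have hden : denoiser pstar u σ = denoiser p u' σ' := by
    unfold denoiser
    have h1 : (∫ x, pstar x * Real.exp (tiltExp σ u x))
        = Z⁻¹ * ∫ x, p x * Real.exp (tiltExp σ' u' x) := by
      simp_rw [hpt]; exact integral_const_mul _ _
    have h2 : (∫ x, (pstar x * Real.exp (tiltExp σ u x)) • x)
        = Z⁻¹ • ∫ x, (p x * Real.exp (tiltExp σ' u' x)) • x := by
      simp_rw [hpt, mul_smul]; exact integral_smul _ _
    rw [h1, h2, mul_inv, smul_smul, inv_inv,
      mul_comm Z, mul_assoc, mul_inv_cancel₀ hZ0, mul_one]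
  refine ⟨⟨hσ'pos, hσ'lt⟩, ?_⟩
  unfold score
  rw [hden, hsq1', hcab, hσ'2, ← hc]
  match_scalars
  · field_simp
  · field_simp
  · field_simp
    ring
end

section
/- Singularity-free form of the tilted score relation: under the assumptions of the score relation theorem, ∇ log q*(u,σ) = (√(1−σ²)/(1−σ²+sσ²))·v − (s/(1−σ²+sσ²))·u + (1/√(1+sσ²))·(√(1−σ²)/√(1+sσ²−σ²))·∇ log q(u',σ'), and every coefficient appearing on the right-hand side is finite for all σ ∈ [0,1] when s > 0. -/
/-!
Multiplying `p` by the Gaussian tilt `exp (⟪v, x⟫ - s/2 ‖x‖²)` and then by the reverse-conditional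
tilt at `(u, σ)` gives again a reverse-conditional tilt of `p`, now at `(u', σ')`: the natural
parameters of the two Gaussian factors simply add. Hence `p*` at `(u, σ)` and `p` at `(u', σ')`
have the same denoiser, and Tweedie's formula turns this into the score relation.
-/

open MeasureTheory Real
open scoped RealInnerProductSpace

section

variable {d : ℕ} {s σ σ' : ℝ}

theorem denoiser_eq_of_tilt_eq {p q : EuclideanSpace ℝ (Fin d) → ℝ}
    {u u' : EuclideanSpace ℝ (Fin d)} {c : ℝ} (hc : c ≠ 0)
    (h : ∀ x, q x * exp (tiltExp σ u x) = c * (p x * exp (tiltExp σ' u' x))) :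
    denoiser q u σ = denoiser p u' σ' := by
  simp only [denoiser, h, integral_const_mul, mul_smul, integral_smul]
  rw [smul_smul, mul_inv_rev, mul_assoc, inv_mul_cancel₀ hc, mul_one]

theorem add_tiltExp_eq_tiltExp {u u' v : EuclideanSpace ℝ (Fin d)}
    (hprec : (1 - σ' ^ 2) / σ' ^ 2 = (1 - σ ^ 2) / σ ^ 2 + s)
    (hnat : (√(1 - σ' ^ 2) / σ' ^ 2) • u' = (√(1 - σ ^ 2) / σ ^ 2) • u + v)
    (x : EuclideanSpace ℝ (Fin d)) :
    ⟪v, x⟫ - s / 2 * ‖x‖ ^ 2 + tiltExp σ u x = tiltExp σ' u' x := by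
  have hhalf : ∀ τ : ℝ, (1 - τ ^ 2) / (2 * τ ^ 2) = (1 - τ ^ 2) / τ ^ 2 / 2 := fun τ => by ring
  simp only [tiltExp, hhalf, hprec, ← real_inner_smul_left, hnat, inner_add_left]
  ring

theorem score_eq_of_denoiser_eq {p q : EuclideanSpace ℝ (Fin d) → ℝ}
    {u u' : EuclideanSpace ℝ (Fin d)}
    (hκ : √(1 - σ' ^ 2) / σ' ^ 2 ≠ 0) (h : denoiser q u σ = denoiser p u' σ') :
    score q u σ = -((σ ^ 2)⁻¹ • u) + (√(1 - σ ^ 2) / σ ^ 2 / (√(1 - σ' ^ 2) / σ' ^ 2)) •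
      (score p u' σ' + (σ' ^ 2)⁻¹ • u') := by
  simp only [score, h, neg_add_cancel_comm, smul_smul, div_mul_cancel₀ _ hκ]

theorem one_sub_sq_add_mul_sq_pos_of_sq_lt_one (hs : 0 ≤ s) (hσ : σ ^ 2 < 1) :
    0 < 1 - σ ^ 2 + s * σ ^ 2 := by
  nlinarith [mul_nonneg hs (sq_nonneg σ)]

theorem one_sub_sq_add_mul_sq_pos_and_one_le (hs : 0 < s) (hσ : σ ^ 2 ≤ 1) :
    0 < 1 - σ ^ 2 + s * σ ^ 2 ∧ 1 ≤ 1 + s * σ ^ 2 := by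
  constructor
  · rcases (sq_nonneg σ).eq_or_lt with h0 | h0
    · rw [← h0]; norm_num
    · nlinarith [mul_pos hs h0]
  · nlinarith [mul_nonneg hs.le (sq_nonneg σ)]

theorem one_sub_sq_div_sq_of_sq_eq (hσ : σ ≠ 0) (hB : 1 + s * σ ^ 2 ≠ 0)
    (hσ' : σ' ^ 2 = σ ^ 2 / (1 + s * σ ^ 2)) :
    (1 - σ' ^ 2) / σ' ^ 2 = (1 - σ ^ 2) / σ ^ 2 + s := by
  rw [hσ', one_sub_div hB, div_div_div_cancel_right₀ hB]
  field_simp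
  ring

theorem sqrt_one_sub_sq_of_sq_eq (hB : 0 < 1 + s * σ ^ 2)
    (hσ' : σ' ^ 2 = σ ^ 2 / (1 + s * σ ^ 2)) :
    √(1 - σ' ^ 2) = √(1 - σ ^ 2 + s * σ ^ 2) / √(1 + s * σ ^ 2) := by
  rw [← sqrt_div' _ hB.le, hσ', one_sub_div hB.ne']
  ring_nf

theorem sqrt_one_sub_sq_div_sq_smul_of_eq {u u' v : EuclideanSpace ℝ (Fin d)}
    (hσ : σ ≠ 0) (hA : 0 < 1 - σ ^ 2 + s * σ ^ 2) (hB : 0 < 1 + s * σ ^ 2)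
    (hσ' : σ' ^ 2 = σ ^ 2 / (1 + s * σ ^ 2))
    (hu' : u' = (σ ^ 2 / √((1 - σ ^ 2 + s * σ ^ 2) * (1 + s * σ ^ 2))) • v +
      √((1 - σ ^ 2) / ((1 - σ ^ 2 + s * σ ^ 2) * (1 + s * σ ^ 2))) • u) :
    (√(1 - σ' ^ 2) / σ' ^ 2) • u' = (√(1 - σ ^ 2) / σ ^ 2) • u + v := by
  rw [sqrt_one_sub_sq_of_sq_eq hB hσ', hσ', hu', sqrt_div' _ (by positivity), sqrt_mul hA.le]
  have ha := (sqrt_pos.2 hA).ne'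
  have hb := (sqrt_pos.2 hB).ne'
  have hb2 := sq_sqrt hB.le
  set a := √(1 - σ ^ 2 + s * σ ^ 2)
  set b := √(1 + s * σ ^ 2)
  match_scalars
  · field_simp
    linear_combination -hb2
  · field_simp
    linear_combination -√(1 - σ ^ 2) * hb2

theorem score_eq_of_denoiser_eq_tilted {p q : EuclideanSpace ℝ (Fin d) → ℝ}
    {u u' v : EuclideanSpace ℝ (Fin d)} (hσ : σ ≠ 0) (hσsq : σ ^ 2 < 1)
    (hA : 0 < 1 - σ ^ 2 + s * σ ^ 2) (hB : 0 < 1 + s * σ ^ 2)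
    (hσ' : σ' ^ 2 = σ ^ 2 / (1 + s * σ ^ 2))
    (hu' : u' = (σ ^ 2 / √((1 - σ ^ 2 + s * σ ^ 2) * (1 + s * σ ^ 2))) • v +
      √((1 - σ ^ 2) / ((1 - σ ^ 2 + s * σ ^ 2) * (1 + s * σ ^ 2))) • u)
    (h : denoiser q u σ = denoiser p u' σ') :
    score q u σ =
      (√(1 - σ ^ 2) / (1 - σ ^ 2 + s * σ ^ 2)) • v - (s / (1 - σ ^ 2 + s * σ ^ 2)) • u +
        ((√(1 + s * σ ^ 2))⁻¹ * (√(1 - σ ^ 2) / √(1 + s * σ ^ 2 - σ ^ 2))) • score p u' σ' := by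
  have ha := (sqrt_pos.2 hA).ne'
  have hb := (sqrt_pos.2 hB).ne'
  have hκ : √(1 - σ' ^ 2) / σ' ^ 2 ≠ 0 := by
    rw [sqrt_one_sub_sq_of_sq_eq hB hσ', hσ']
    positivity
  have ha2 := sq_sqrt hA.le
  have hb2 := sq_sqrt hB.le
  have hc2 := sq_sqrt (sub_pos.2 hσsq).le
  rw [score_eq_of_denoiser_eq hκ h, hu', sqrt_one_sub_sq_of_sq_eq hB hσ', hσ',
    sqrt_div' _ (by positivity), sqrt_mul hA.le,
    show 1 + s * σ ^ 2 - σ ^ 2 = 1 - σ ^ 2 + s * σ ^ 2 by ring]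
  set a := √(1 - σ ^ 2 + s * σ ^ 2)
  set b := √(1 + s * σ ^ 2)
  set c := √(1 - σ ^ 2)
  rw [← ha2, ← hb2]
  match_scalars
  · field_simp
    linear_combination hc2 - ha2
  · field_simp
  · field_simp

end

theorem score_relation_singularity_free_general {d : ℕ} (p : EuclideanSpace ℝ (Fin d) → ℝ)
    (v : EuclideanSpace ℝ (Fin d)) (s : ℝ) (hs : 0 ≤ s)
    (hZ : 0 < ∫ x, p x * Real.exp (⟪v, x⟫ - s / 2 * ‖x‖ ^ 2))
    (pstar : EuclideanSpace ℝ (Fin d) → ℝ)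
    (hpstar : ∀ x, pstar x = p x * Real.exp (⟪v, x⟫ - s / 2 * ‖x‖ ^ 2) /
      (∫ y, p y * Real.exp (⟪v, y⟫ - s / 2 * ‖y‖ ^ 2)))
    (σ : ℝ) (hσ : σ ∈ Set.Ioo (0 : ℝ) 1) (u : EuclideanSpace ℝ (Fin d))
    (σ' : ℝ) (hσ' : σ' = Real.sqrt (σ ^ 2 / (1 + s * σ ^ 2)))
    (u' : EuclideanSpace ℝ (Fin d))
    (hu' : u' = (σ ^ 2 / Real.sqrt ((1 - σ ^ 2 + s * σ ^ 2) * (1 + s * σ ^ 2))) • v +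
      Real.sqrt ((1 - σ ^ 2) / ((1 - σ ^ 2 + s * σ ^ 2) * (1 + s * σ ^ 2))) • u) :
    score pstar u σ =
      (Real.sqrt (1 - σ ^ 2) / (1 - σ ^ 2 + s * σ ^ 2)) • v -
        (s / (1 - σ ^ 2 + s * σ ^ 2)) • u +
        ((Real.sqrt (1 + s * σ ^ 2))⁻¹ *
          (Real.sqrt (1 - σ ^ 2) / Real.sqrt (1 + s * σ ^ 2 - σ ^ 2))) •
          score p u' σ' ∧
    (0 < s → ∀ τ ∈ Set.Icc (0 : ℝ) 1, 0 < 1 - τ ^ 2 + s * τ ^ 2 ∧ 1 ≤ 1 + s * τ ^ 2) := by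
  obtain ⟨hσ0, hσ1⟩ := hσ
  have hσsq : σ ^ 2 < 1 := by nlinarith
  have hA := one_sub_sq_add_mul_sq_pos_of_sq_lt_one hs hσsq
  have hB : 0 < 1 + s * σ ^ 2 := by positivity
  have hσ'sq : σ' ^ 2 = σ ^ 2 / (1 + s * σ ^ 2) := by rw [hσ', sq_sqrt (by positivity)]
  have hden : denoiser pstar u σ = denoiser p u' σ' := by
    refine denoiser_eq_of_tilt_eq (inv_ne_zero hZ.ne') fun x => ?_
    rw [hpstar, ← add_tiltExp_eq_tiltExp (one_sub_sq_div_sq_of_sq_eq hσ0.ne' hB.ne' hσ'sq)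
      (sqrt_one_sub_sq_div_sq_smul_of_eq hσ0.ne' hA hB hσ'sq hu') x, exp_add]
    ring
  exact ⟨score_eq_of_denoiser_eq_tilted hσ0.ne' hσsq hA hB hσ'sq hu' hden,
    fun hs' τ hτ => one_sub_sq_add_mul_sq_pos_and_one_le hs' (pow_le_one₀ hτ.1 hτ.2)⟩

/-- Singularity-free form of the tilted score relation, whose right-hand side coefficients
have denominators bounded away from zero for all σ ∈ [0,1] when s > 0. -/
theorem score_relation_singularity_free {d : ℕ} (p : EuclideanSpace ℝ (Fin d) → ℝ)
    (v : EuclideanSpace ℝ (Fin d)) (s : ℝ) (hs : 0 ≤ s)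
    (hZ : 0 < ∫ x, p x * Real.exp (⟪v, x⟫ - s / 2 * ‖x‖ ^ 2))
    (pstar : EuclideanSpace ℝ (Fin d) → ℝ)
    (hpstar : ∀ x, pstar x = p x * Real.exp (⟪v, x⟫ - s / 2 * ‖x‖ ^ 2) /
      (∫ y, p y * Real.exp (⟪v, y⟫ - s / 2 * ‖y‖ ^ 2)))
    (hFint : ∀ (u : EuclideanSpace ℝ (Fin d)) (σ : ℝ),
      Integrable (fun x => p x * Real.exp (tiltExp σ u x)) ∧
      Integrable (fun x => (p x * Real.exp (tiltExp σ u x)) • x))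
    (hGint : ∀ (u : EuclideanSpace ℝ (Fin d)) (σ : ℝ),
      Integrable (fun x => pstar x * Real.exp (tiltExp σ u x)) ∧
      Integrable (fun x => (pstar x * Real.exp (tiltExp σ u x)) • x))
    (σ : ℝ) (hσ : σ ∈ Set.Ioo (0 : ℝ) 1) (u : EuclideanSpace ℝ (Fin d))
    (σ' : ℝ) (hσ' : σ' = Real.sqrt (σ ^ 2 / (1 + s * σ ^ 2)))
    (u' : EuclideanSpace ℝ (Fin d))
    (hu' : u' = (σ ^ 2 / Real.sqrt ((1 - σ ^ 2 + s * σ ^ 2) * (1 + s * σ ^ 2))) • v +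
      Real.sqrt ((1 - σ ^ 2) / ((1 - σ ^ 2 + s * σ ^ 2) * (1 + s * σ ^ 2))) • u) :
    score pstar u σ =
      (Real.sqrt (1 - σ ^ 2) / (1 - σ ^ 2 + s * σ ^ 2)) • v -
        (s / (1 - σ ^ 2 + s * σ ^ 2)) • u +
        ((Real.sqrt (1 + s * σ ^ 2))⁻¹ *
          (Real.sqrt (1 - σ ^ 2) / Real.sqrt (1 + s * σ ^ 2 - σ ^ 2))) •
          score p u' σ' ∧
    (0 < s → ∀ τ ∈ Set.Icc (0 : ℝ) 1, 0 < 1 - τ ^ 2 + s * τ ^ 2 ∧ 1 ≤ 1 + s * τ ^ 2) :=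
  score_relation_singularity_free_general p v s hs hZ pstar hpstar σ hσ u σ' hσ' u' hu'
end
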